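/- Let Φ: ℝ → ℝ be convex and non-increasing, γ > 0, and 0 ≤ η ≤ 1. Then for every u ≤ -γ, η·Φ(u) + (1-η)·Φ(-u) ≥ η·Φ(-γ) + (1-η)·Φ(γ) whenever η ≥ 1/2 (and the symmetric statement holds for η ≤ 1/2 with u ≥ γ). -/

import Mathlib

lemma misrank_aux_pair (Φ : ℝ → ℝ) (hconv : ConvexOn ℝ Set.univ Φ)
    (a d t : ℝ) (ht0 : 0 ≤ t) (ht1 : t ≤ 1) :
    Φ ((1-t)*a + t*d) + Φ (t*a + (1-t)*d) ≤ Φ a + Φ d := by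
  have h1 := hconv.2 (Set.mem_univ a) (Set.mem_univ d) (by linarith : (0:ℝ) ≤ 1 - t) ht0
    (by ring)
  have h2 := hconv.2 (Set.mem_univ a) (Set.mem_univ d) ht0 (by linarith : (0:ℝ) ≤ 1 - t)
    (by ring)
  simp only [smul_eq_mul] at h1 h2
  linarith

lemma misrank_half (Φ : ℝ → ℝ) (hconv : ConvexOn ℝ Set.univ Φ)
    (hΦanti : ∀ a b : ℝ, a ≤ b → Φ b ≤ Φ a)
    (γ : ℝ) (hγ : 0 < γ) (η : ℝ) (hη1 : η ≤ 1) (hη : 1/2 ≤ η)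
    (u : ℝ) (hu : u ≤ -γ) :
    η * Φ (-γ) + (1 - η) * Φ γ ≤ η * Φ u + (1 - η) * Φ (-u) := by
  have hu0 : u < 0 := by linarith
  set t : ℝ := (-γ - u) / (-2*u) with ht
  have hD : 0 < -2*u := by linarith
  have ht0 : 0 ≤ t := div_nonneg (by linarith) hD.le
  have ht1 : t ≤ 1 := by
    rw [div_le_one hD]; linarith
  have hb : (1-t)*u + t*(-u) = -γ := by
    have e : t * (-2*u) = -γ - u := by rw [ht]; exact div_mul_cancel₀ _ hD.ne'
    linear_combination e
  have hc : t*u + (1-t)*(-u) = γ := by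
    have e : t * (-2*u) = -γ - u := by rw [ht]; exact div_mul_cancel₀ _ hD.ne'
    linear_combination -e
  have key := misrank_aux_pair Φ hconv u (-u) t ht0 ht1
  rw [hb, hc] at key
  -- Φ(-γ) + Φ(γ) ≤ Φ u + Φ(-u)
  have h1 : Φ γ - Φ (-u) ≥ 0 := by
    have := hΦanti γ (-u) (by linarith); linarith
  -- Φ u - Φ(-γ) ≥ Φ γ - Φ(-u) ≥ 0, and η ≥ 1-η
  nlinarith [hΦanti u (-γ) hu]

theorem misranking_surrogate_lower_bound
    (Φ : ℝ → ℝ) (hconv : ConvexOn ℝ Set.univ Φ)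
    (hΦanti : ∀ a b : ℝ, a ≤ b → Φ b ≤ Φ a)
    (γ : ℝ) (hγ : 0 < γ) (η : ℝ) (hη0 : 0 ≤ η) (hη1 : η ≤ 1) :
    (η ≥ 1/2 → ∀ u : ℝ, u ≤ -γ →
      η * Φ (-γ) + (1 - η) * Φ γ ≤ η * Φ u + (1 - η) * Φ (-u)) ∧
    (η ≤ 1/2 → ∀ u : ℝ, γ ≤ u →
      η * Φ γ + (1 - η) * Φ (-γ) ≤ η * Φ u + (1 - η) * Φ (-u)) := by
  constructor
  · intro hη u hu
    exact misrank_half Φ hconv hΦanti γ hγ η hη1 hη u hu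
  · intro hη u hu
    have := misrank_half Φ hconv hΦanti γ hγ (1-η) (by linarith) (by linarith)
      (-u) (by linarith)
    rw [neg_neg] at this
    linarith
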